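/- (Sufficient and necessary condition for direct ballistic capture.) Assume 0 < r_f < 1 and r_f³ ≤ 2μ. For every α ∈ ℝ and every V ≥ 0, let C = W(α) − V² denote the Jacobi energy of the direct insertion state D(α,V). Then the Keplerian energy with respect to the Moon of D(α,V) satisfies E ≤ 0 if and only if C_D*(α) ≤ C ≤ W(α), where C_D*(α) = G(α) − 2r_f² + 2√(2μ·r_f). -/

import Mathlib

/-!
Measured from the Moon, the insertion point lies at distance `r_f` and the inertial speed of
`D(α,V)` is `V + r_f`, so `E = (V + r_f)² / 2 − μ / r_f`: capture means `V + r_f` is at most the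
escape speed `s = √(2μ / r_f)`. On the other side, `W(α) − C_D*(α) = (s − r_f)²` while
`W(α) − C = V²`. The hypothesis `r_f³ ≤ 2μ` says `r_f ≤ s`, so both conditions read `V ≤ s − r_f`.
-/

/-- Keplerian energy with respect to the Moon. -/
noncomputable def kepE (μ x y u v : ℝ) : ℝ :=
  (1 / 2) * ((u - y) ^ 2 + (v + x + μ - 1) ^ 2)
    - μ / Real.sqrt ((x + μ - 1) ^ 2 + y ^ 2)

/-- The function W(α). -/
noncomputable def Wfun (μ rf α : ℝ) : ℝ :=
  (rf * Real.cos α + 1 - μ) ^ 2 + (rf * Real.sin α) ^ 2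
    + 2 * (1 - μ) / Real.sqrt (1 + 2 * rf * Real.cos α + rf ^ 2)
    + 2 * μ / rf + μ * (1 - μ)

/-- The function G(α). -/
noncomputable def Gfun (μ rf α : ℝ) : ℝ :=
  2 * rf ^ 2 + 2 * (1 - μ) * (rf * Real.cos α + 1 - μ)
    + (1 - μ) * (2 * μ - 1)
    + 2 * (1 - μ) / Real.sqrt (1 + 2 * rf * Real.cos α + rf ^ 2)

/-- Critical Jacobi energy for direct insertion. -/
noncomputable def CDstar (μ rf α : ℝ) : ℝ :=
  Gfun μ rf α - 2 * rf ^ 2 + 2 * Real.sqrt (2 * μ * rf)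

open Real

lemma add_sq_le_sq_iff_sq_le_sub_sq {a b c : ℝ} (ha : 0 ≤ a) (hb : 0 ≤ b) (hbc : b ≤ c) :
    (a + b) ^ 2 ≤ c ^ 2 ↔ a ^ 2 ≤ (c - b) ^ 2 := by
  rw [pow_le_pow_iff_left₀ (by positivity) (hb.trans hbc) two_ne_zero,
    pow_le_pow_iff_left₀ ha (sub_nonneg.2 hbc) two_ne_zero, le_sub_iff_add_le]

lemma kepE_directInsertion (μ rf α V : ℝ) (hrf : 0 ≤ rf) :
    kepE μ (rf * cos α + 1 - μ) (rf * sin α) (-V * sin α) (V * cos α)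
      = (V + rf) ^ 2 / 2 - μ / rf := by
  have hdist : √((rf * cos α + 1 - μ + μ - 1) ^ 2 + (rf * sin α) ^ 2) = rf := by
    rw [show (rf * cos α + 1 - μ + μ - 1) ^ 2 + (rf * sin α) ^ 2 = rf ^ 2 by
      linear_combination rf ^ 2 * sin_sq_add_cos_sq α]
    exact sqrt_sq hrf
  rw [kepE, hdist]
  linear_combination (V + rf) ^ 2 / 2 * sin_sq_add_cos_sq α

lemma kepE_directInsertion_nonpos_iff (μ α : ℝ) {rf V : ℝ} (hμ : 0 ≤ μ) (hrf : 0 < rf) :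
    kepE μ (rf * cos α + 1 - μ) (rf * sin α) (-V * sin α) (V * cos α) ≤ 0
      ↔ (V + rf) ^ 2 ≤ √(2 * μ / rf) ^ 2 := by
  rw [kepE_directInsertion μ rf α V hrf.le, sq_sqrt (by positivity), sub_nonpos,
    div_le_div_iff₀ two_pos hrf, le_div_iff₀ hrf]
  constructor <;> intro h <;> linarith

lemma Wfun_sub_Gfun (μ rf α : ℝ) : Wfun μ rf α - Gfun μ rf α = 2 * μ / rf - rf ^ 2 := by
  rw [Wfun, Gfun]
  linear_combination rf ^ 2 * sin_sq_add_cos_sq α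

lemma Wfun_sub_CDstar (μ α : ℝ) {rf : ℝ} (hμ : 0 ≤ μ) (hrf : 0 < rf) :
    Wfun μ rf α - CDstar μ rf α = (√(2 * μ / rf) - rf) ^ 2 := by
  have hsqrt : √(2 * μ * rf) = rf * √(2 * μ / rf) := by
    rw [show 2 * μ * rf = rf ^ 2 * (2 * μ / rf) by field_simp, sqrt_mul (sq_nonneg rf),
      sqrt_sq hrf.le]
  have hsq : √(2 * μ / rf) ^ 2 = 2 * μ / rf := sq_sqrt (by positivity)
  have hWG := Wfun_sub_Gfun μ rf α
  rw [CDstar, hsqrt]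
  linear_combination hWG - hsq

theorem direct_ballistic_capture_iff_general
    (μ rf : ℝ) (hrf0 : 0 < rf)
    (hrf3 : rf ^ 3 ≤ 2 * μ) (α V : ℝ) (hV : 0 ≤ V) :
    kepE μ (rf * Real.cos α + 1 - μ) (rf * Real.sin α)
        (-V * Real.sin α) (V * Real.cos α) ≤ 0
      ↔ (CDstar μ rf α ≤ Wfun μ rf α - V ^ 2 ∧ Wfun μ rf α - V ^ 2 ≤ Wfun μ rf α) := by
  have hμ : 0 ≤ μ := by nlinarith [pow_pos hrf0 3]
  have hrf_le_escape : rf ≤ √(2 * μ / rf) := by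
    refine le_sqrt_of_sq_le ?_
    rw [le_div_iff₀ hrf0]
    linarith
  rw [kepE_directInsertion_nonpos_iff μ α hμ hrf0,
    add_sq_le_sq_iff_sq_le_sub_sq hV hrf0.le hrf_le_escape, ← Wfun_sub_CDstar μ α hμ hrf0]
  constructor
  · intro h
    exact ⟨by linarith, by linarith [sq_nonneg V]⟩
  · rintro ⟨h, -⟩
    linarith

/-- Sufficient and necessary condition for direct ballistic capture. -/
theorem direct_ballistic_capture_iff
    (μ rf : ℝ) (hμ0 : 0 < μ) (hμ1 : μ < 1) (hrf0 : 0 < rf) (hrf1 : rf < 1)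
    (hrf3 : rf ^ 3 ≤ 2 * μ) (α V : ℝ) (hV : 0 ≤ V) :
    kepE μ (rf * Real.cos α + 1 - μ) (rf * Real.sin α)
        (-V * Real.sin α) (V * Real.cos α) ≤ 0
      ↔ (CDstar μ rf α ≤ Wfun μ rf α - V ^ 2 ∧ Wfun μ rf α - V ^ 2 ≤ Wfun μ rf α) :=
  direct_ballistic_capture_iff_general μ rf hrf0 hrf3 α V hV
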